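/- Let G be a finite simple graph with at least one vertex. The following four statements are equivalent: (1) α(G; c_G) = c(G); (2) there exists a 0-1 state on G; (3) there exists a 0-1 state v on G such that ∑_{i ∈ V(G)} c_G(i)·v(i) = α(G; c_G); (4) there exists a state v on G such that ∑_{i ∈ V(G)} c_G(i)·v(i) = α(G; c_G). -/

import Mathlib

open Finset

/-- A maximal clique of a simple graph, as a finite set of vertices. -/
def IsMaxClique {V : Type*} (G : SimpleGraph V) (C : Finset V) : Prop :=
  G.IsClique (C : Set V) ∧ ∀ D : Finset V, G.IsClique (D : Set V) → C ⊆ D → D = C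

/-- The finite set of all maximal cliques of a finite simple graph. -/
noncomputable def maxCliques {V : Type*} [Fintype V] (G : SimpleGraph V) :
    Finset (Finset V) := by
  classical exact Finset.univ.filter (fun C => IsMaxClique G C)

/-- `c(G)`: the total number of maximal cliques of `G`. -/
noncomputable def numMaxCliques {V : Type*} [Fintype V] (G : SimpleGraph V) : ℕ :=
  (maxCliques G).card

/-- `c_G(i)`: the number of maximal cliques of `G` containing the vertex `i`. -/
noncomputable def cG {V : Type*} [Fintype V] (G : SimpleGraph V) (i : V) : ℕ := by
  classical exact ((maxCliques G).filter (fun C => i ∈ C)).card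

/-- A state on a finite simple graph: values in `[0,1]` summing to `1` on each
maximal clique. -/
def IsGraphState {V : Type*} [Fintype V] (G : SimpleGraph V) (p : V → ℝ) : Prop :=
  (∀ i, 0 ≤ p i ∧ p i ≤ 1) ∧ ∀ C ∈ maxCliques G, ∑ i ∈ C, p i = 1

/-- An independent set of a simple graph: pairwise non-adjacent vertices. -/
def IsIndep {V : Type*} (G : SimpleGraph V) (I : Finset V) : Prop :=
  ∀ i ∈ I, ∀ j ∈ I, i ≠ j → ¬ G.Adj i j

/-- `α(G; w)`: the maximum weight of an independent set of `G` for the weight `w`. -/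
noncomputable def alphaW {V : Type*} [Fintype V] (G : SimpleGraph V) (w : V → ℝ) : ℝ :=
  sSup { x : ℝ | ∃ I : Finset V, IsIndep G I ∧ x = ∑ i ∈ I, w i }

/-! The weights `c_G` double count vertex–clique incidences:
`∑ i, c_G(i) v(i) = ∑ C, ∑ i ∈ C, v(i)`, which is `c(G)` for every state `v`.
An independent set meets each maximal clique at most once, so `α(G; c_G) ≤ c(G)`, with
equality exactly when some independent set meets every maximal clique once, that is, when its
indicator is a 0-1 state. Conversely the support of a 0-1 state is independent, because every
edge lies in a maximal clique, on which the state sums to `1`. -/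

section
variable {V : Type*} (G : SimpleGraph V)

theorem isIndep_empty : IsIndep G ∅ := by
  simp [IsIndep]

theorem IsIndep.card_inter_le_one [DecidableEq V] {I C : Finset V} (hI : IsIndep G I)
    (hC : G.IsClique (C : Set V)) : #(C ∩ I) ≤ 1 := by
  refine card_le_one.2 fun a ha b hb => ?_
  rw [mem_inter] at ha hb
  by_contra hne
  exact hI a ha.2 b hb.2 hne (hC ha.1 hb.1 hne)

end

theorem sum_indicator_eq_card_inter {V : Type*} [DecidableEq V] (I C : Finset V) :
    ∑ i ∈ C, (I : Set V).indicator (1 : V → ℝ) i = #(C ∩ I) := by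
  simp [Set.indicator_apply, sum_ite_mem]

section
variable {V : Type*} [Fintype V] (G : SimpleGraph V)

theorem mem_maxCliques {C : Finset V} : C ∈ maxCliques G ↔ IsMaxClique G C := by
  simp [maxCliques]

theorem exists_maxClique_superset {D : Finset V} (hD : G.IsClique (D : Set V)) :
    ∃ C ∈ maxCliques G, D ⊆ C := by
  classical
  obtain ⟨C, hC, hmax⟩ := exists_max_image
    (univ.filter fun E : Finset V => G.IsClique (E : Set V) ∧ D ⊆ E) card ⟨D, by simp [hD]⟩
  simp only [mem_filter, mem_univ, true_and] at hC hmax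
  refine ⟨C, (mem_maxCliques G).2 ⟨hC.1, fun E hE hCE => ?_⟩, hC.2⟩
  exact (eq_of_subset_of_card_le hCE (hmax E ⟨hE, hC.2.trans hCE⟩)).symm

open Classical in
theorem nonempty_filter_isIndep : (univ.filter (IsIndep G)).Nonempty :=
  ⟨∅, by simp [isIndep_empty]⟩

open Classical in
theorem alphaW_eq_sup' (w : V → ℝ) :
    alphaW G w = (univ.filter (IsIndep G)).sup' (nonempty_filter_isIndep G)
      fun I => ∑ i ∈ I, w i := by
  rw [sup'_eq_csSup_image, alphaW]
  congr 1
  ext x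
  simp [eq_comm]

theorem le_alphaW {w : V → ℝ} {I : Finset V} (hI : IsIndep G I) :
    ∑ i ∈ I, w i ≤ alphaW G w := by
  classical
  rw [alphaW_eq_sup']
  exact le_sup' (fun I => ∑ i ∈ I, w i) (by simpa using hI)

theorem alphaW_le {w : V → ℝ} {b : ℝ} (h : ∀ I, IsIndep G I → ∑ i ∈ I, w i ≤ b) :
    alphaW G w ≤ b := by
  classical
  rw [alphaW_eq_sup']
  exact sup'_le _ _ fun I hI => h I (by simpa using hI)

theorem exists_isIndep_sum_eq_alphaW (w : V → ℝ) :
    ∃ I, IsIndep G I ∧ ∑ i ∈ I, w i = alphaW G w := by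
  classical
  obtain ⟨I, hI, hmax⟩ := exists_mem_eq_sup' (nonempty_filter_isIndep G)
    fun I : Finset V => ∑ i ∈ I, w i
  exact ⟨I, by simpa using hI, by rw [alphaW_eq_sup', hmax]⟩

theorem sum_cG_mul_eq_sum_maxCliques (v : V → ℝ) :
    ∑ i, (cG G i : ℝ) * v i = ∑ C ∈ maxCliques G, ∑ i ∈ C, v i := by
  classical
  simp only [cG, card_filter, Nat.cast_sum, Nat.cast_ite, Nat.cast_one, Nat.cast_zero,
    sum_mul, ite_mul, one_mul, zero_mul]
  rw [sum_comm]
  simp [sum_ite_mem]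

theorem IsGraphState.sum_cG_mul {v : V → ℝ} (hv : IsGraphState G v) :
    ∑ i, (cG G i : ℝ) * v i = numMaxCliques G := by
  rw [sum_cG_mul_eq_sum_maxCliques, sum_congr rfl hv.2, sum_const, numMaxCliques, nsmul_one]

theorem sum_cG_mul_indicator (I : Finset V) :
    ∑ i, (cG G i : ℝ) * (I : Set V).indicator 1 i = ∑ i ∈ I, (cG G i : ℝ) := by
  classical
  simp [Set.indicator_apply, sum_ite_mem]

theorem IsIndep.sum_cG_le {I : Finset V} (hI : IsIndep G I) :
    ∑ i ∈ I, (cG G i : ℝ) ≤ numMaxCliques G := by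
  classical
  rw [← sum_cG_mul_indicator, sum_cG_mul_eq_sum_maxCliques, numMaxCliques, card_eq_sum_ones,
    Nat.cast_sum, Nat.cast_one]
  refine sum_le_sum fun C hC => ?_
  rw [sum_indicator_eq_card_inter]
  exact_mod_cast hI.card_inter_le_one G ((mem_maxCliques G).1 hC).1

theorem alphaW_cG_le_numMaxCliques : alphaW G (fun i => (cG G i : ℝ)) ≤ numMaxCliques G :=
  alphaW_le G fun _ hI => hI.sum_cG_le G

theorem IsIndep.isGraphState_indicator {I : Finset V} (hI : IsIndep G I)
    (hsum : ∑ i ∈ I, (cG G i : ℝ) = numMaxCliques G) :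
    IsGraphState G ((I : Set V).indicator 1) := by
  classical
  refine ⟨fun i => ?_, ?_⟩
  · by_cases hi : i ∈ I <;> simp [hi]
  have hle : ∀ C ∈ maxCliques G, ∑ i ∈ C, (I : Set V).indicator (1 : V → ℝ) i ≤ 1 :=
    fun C hC => by
      rw [sum_indicator_eq_card_inter]
      exact_mod_cast hI.card_inter_le_one G ((mem_maxCliques G).1 hC).1
  -- the clique sums are at most `1` and add up to `c(G)`, so each of them is `1`
  refine (sum_eq_sum_iff_of_le hle).1 ?_
  rw [← sum_cG_mul_eq_sum_maxCliques, sum_cG_mul_indicator, hsum, sum_const, nsmul_one,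
    numMaxCliques]

theorem IsGraphState.isIndep_filter_eq_one [DecidableEq V] {v : V → ℝ}
    (hv : IsGraphState G v) : IsIndep G (univ.filter fun i => v i = 1) := by
  intro i hi j hj hne hadj
  simp only [mem_filter, mem_univ, true_and] at hi hj
  have hpair : G.IsClique (({i, j} : Finset V) : Set V) := by
    rw [coe_pair]
    exact G.isClique_pair.2 fun _ => hadj
  obtain ⟨C, hC, hsub⟩ := exists_maxClique_superset G hpair
  have := sum_le_sum_of_subset_of_nonneg hsub fun k _ _ => (hv.1 k).1
  rw [sum_pair hne, hv.2 C hC, hi, hj] at this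
  norm_num at this

theorem sum_cG_mul_eq_sum_filter_eq_one {v : V → ℝ} (h01 : ∀ i, v i = 0 ∨ v i = 1) :
    ∑ i, (cG G i : ℝ) * v i = ∑ i ∈ univ.filter (fun i => v i = 1), (cG G i : ℝ) := by
  classical
  rw [sum_filter]
  refine sum_congr rfl fun i _ => ?_
  rcases h01 i with h | h <;> simp [h]

theorem alphaW_cG_eq_numMaxCliques_of_zero_one_state {v : V → ℝ} (hv : IsGraphState G v)
    (h01 : ∀ i, v i = 0 ∨ v i = 1) : alphaW G (fun i => (cG G i : ℝ)) = numMaxCliques G := by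
  classical
  refine le_antisymm (alphaW_cG_le_numMaxCliques G) ?_
  calc (numMaxCliques G : ℝ) = ∑ i, (cG G i : ℝ) * v i := (hv.sum_cG_mul G).symm
    _ = ∑ i ∈ univ.filter (fun i => v i = 1), (cG G i : ℝ) :=
      sum_cG_mul_eq_sum_filter_eq_one G h01
    _ ≤ _ := le_alphaW G (hv.isIndep_filter_eq_one G)

end

theorem ks_contextuality_tfae_general {V : Type*} [Fintype V] (G : SimpleGraph V) :
    List.TFAE
      [ alphaW G (fun i => (cG G i : ℝ)) = (numMaxCliques G : ℝ),
        ∃ v : V → ℝ, IsGraphState G v ∧ (∀ i, v i = 0 ∨ v i = 1),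
        ∃ v : V → ℝ, (IsGraphState G v ∧ (∀ i, v i = 0 ∨ v i = 1)) ∧
          ∑ i : V, (cG G i : ℝ) * v i = alphaW G (fun i => (cG G i : ℝ)),
        ∃ v : V → ℝ, IsGraphState G v ∧
          ∑ i : V, (cG G i : ℝ) * v i = alphaW G (fun i => (cG G i : ℝ)) ] := by
  tfae_have 1 → 2 := by
    intro h
    obtain ⟨I, hI, hsum⟩ := exists_isIndep_sum_eq_alphaW G fun i => (cG G i : ℝ)
    refine ⟨(I : Set V).indicator 1, hI.isGraphState_indicator G (hsum.trans h), fun i => ?_⟩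
    by_cases hi : i ∈ (I : Set V) <;> simp [hi]
  tfae_have 2 → 3 := fun ⟨v, hv, h01⟩ =>
    ⟨v, ⟨hv, h01⟩, by rw [hv.sum_cG_mul G, alphaW_cG_eq_numMaxCliques_of_zero_one_state G hv h01]⟩
  tfae_have 3 → 4 := fun ⟨v, ⟨hv, _⟩, hsum⟩ => ⟨v, hv, hsum⟩
  tfae_have 4 → 1 := fun ⟨v, hv, hsum⟩ => by rw [← hsum, hv.sum_cG_mul G]
  tfae_finish

/-- **Parametric characterization of (non-)KS-contextuality.** For a finite simple graph
`G` with at least one vertex, the following are equivalent: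
1. `α(G; c_G) = c(G)`;
2. there exists a 0-1 state on `G`;
3. there exists a 0-1 state `v` on `G` with `∑ i, c_G(i)·v(i) = α(G; c_G)`;
4. there exists a state `v` on `G` with `∑ i, c_G(i)·v(i) = α(G; c_G)`. -/
theorem ks_contextuality_tfae {V : Type*} [Fintype V] [Nonempty V] (G : SimpleGraph V) :
    List.TFAE
      [ alphaW G (fun i => (cG G i : ℝ)) = (numMaxCliques G : ℝ),
        ∃ v : V → ℝ, IsGraphState G v ∧ (∀ i, v i = 0 ∨ v i = 1),
        ∃ v : V → ℝ, (IsGraphState G v ∧ (∀ i, v i = 0 ∨ v i = 1)) ∧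
          ∑ i : V, (cG G i : ℝ) * v i = alphaW G (fun i => (cG G i : ℝ)),
        ∃ v : V → ℝ, IsGraphState G v ∧
          ∑ i : V, (cG G i : ℝ) * v i = alphaW G (fun i => (cG G i : ℝ)) ] :=
  ks_contextuality_tfae_general G
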